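/- arXiv:1812.03349 — 2 statements merged into one kernel-verified Lean document; each statement's English description precedes it below -/
import Mathlib

section
/- Let ξ be a sequence with dom(ξ) dense and T_ξ = C_ξ*C_ξ. Then ξ is a lower semi-frame with bound A > 0 (i.e. A‖f‖² ≤ Σₙ|⟨f,ξₙ⟩|² for all f ∈ H) if and only if 0 ∈ ρ(T_ξ) and ‖T_ξ⁻¹‖ ≤ A⁻¹. -/
local notation "⟪" x ", " y "⟫" => @inner ℂ _ _ x y

/-!
The analysis operator `C f = (⟪ξ n, f⟫)ₙ` is a closed operator from `H` to `ℓ²`, and `T_ξ = C† C`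
is characterised weakly by `⟪C g, C u⟫ = ⟪g, T_ξ u⟫` for all `g ∈ dom C`. A lower bound
`A ‖f‖² ≤ ‖C f‖²` makes the range of `C` closed, so the Riesz representation theorem on that
range solves `T_ξ u = h` for every `h`; testing the weak equation against `u` itself gives
`A ‖u‖ ≤ ‖h‖`, hence a bounded inverse of norm at most `A⁻¹`. Conversely, if `T_ξ u = f` then
`‖f‖² = ⟪C f, C u⟫ ≤ ‖C f‖ ‖C u‖` and `‖C u‖² = re ⟪u, f⟫ ≤ A⁻¹ ‖f‖²`.
-/

open scoped InnerProductSpace lp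

theorem Submodule.exists_continuousLinearMap_apply_eq_iff_mem {𝕜 E F : Type*}
    [NontriviallyNormedField 𝕜] [NormedAddCommGroup E] [NormedSpace 𝕜 E]
    [SeminormedAddCommGroup F] [NormedSpace 𝕜 F]
    (G : Submodule 𝕜 (E × F)) (hsurj : ∀ y, ∃ x, (x, y) ∈ G) {c : ℝ} (hc : 0 ≤ c)
    (hbound : ∀ x y, (x, y) ∈ G → ‖x‖ ≤ c * ‖y‖) :
    ∃ S : F →L[𝕜] E, (∀ x y, (x, y) ∈ G ↔ S y = x) ∧ ‖S‖ ≤ c := by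
  choose S hS using hsurj
  have huniq : ∀ x y, (x, y) ∈ G → S y = x := fun x y hxy => by
    simpa [sub_eq_zero] using hbound _ _ (G.sub_mem (hS y) hxy)
  let S' : F →ₗ[𝕜] E :=
    { toFun := S
      map_add' := fun y y' => huniq _ _ (G.add_mem (hS y) (hS y'))
      map_smul' := fun a y => huniq _ _ (G.smul_mem a (hS y)) }
  refine ⟨S'.mkContinuous c fun y => hbound _ _ (hS y), fun x y => ⟨huniq x y, ?_⟩,
    LinearMap.mkContinuous_norm_le _ hc _⟩
  rintro rfl
  exact hS y

namespace LinearPMap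

variable {𝕜 E F : Type*}

theorem IsClosed.isClosed_range_of_bound [NontriviallyNormedField 𝕜]
    [NormedAddCommGroup E] [NormedSpace 𝕜 E] [CompleteSpace E]
    [NormedAddCommGroup F] [NormedSpace 𝕜 F] [CompleteSpace F] {C : E →ₗ.[𝕜] F}
    (hC : C.IsClosed) {c : ℝ} (hbound : ∀ x : C.domain, ‖(x : E)‖ ≤ c * ‖C x‖) :
    _root_.IsClosed (Set.range C) := by
  have : CompleteSpace C.graph := hC.completeSpace_coe
  let snd : C.graph →L[𝕜] F := (ContinuousLinearMap.snd 𝕜 E F).comp C.graph.subtypeL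
  have hK : (0 : ℝ) ≤ max c 1 := le_max_of_le_right zero_le_one
  have hsnd : AntilipschitzWith (max c 1).toNNReal snd := by
    refine snd.antilipschitz_of_bound fun ⟨p, hp⟩ => ?_
    obtain ⟨x, hx₁, hx₂⟩ := C.mem_graph_iff.mp hp
    change ‖p‖ ≤ _ * ‖p.2‖
    rw [Real.coe_toNNReal _ hK, Prod.norm_def]
    refine max_le ?_ (le_mul_of_one_le_left (norm_nonneg p.2) (le_max_right _ _))
    calc ‖p.1‖ = ‖(x : E)‖ := by rw [hx₁]
      _ ≤ c * ‖p.2‖ := by rw [← hx₂]; exact hbound x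
      _ ≤ max c 1 * ‖p.2‖ := by gcongr; exact le_max_left _ _
  convert hsnd.isClosed_range snd.uniformContinuous using 1
  ext y
  rw [mem_range_iff]
  constructor
  · rintro ⟨x, hx⟩
    exact ⟨⟨(x, y), hx⟩, rfl⟩
  · rintro ⟨⟨p, hp⟩, rfl⟩
    exact ⟨p.1, hp⟩

variable [RCLike 𝕜] [NormedAddCommGroup E] [InnerProductSpace 𝕜 E]
  [NormedAddCommGroup F] [InnerProductSpace 𝕜 F]

-- The graph of `C† ∘ C`, in a weak form that makes sense without `dom C` being dense.
def adjointCompSelfGraph (C : E →ₗ.[𝕜] F) : Submodule 𝕜 (E × E) where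
  carrier := {p | ∃ u : C.domain, (u : E) = p.1 ∧ ∀ g : C.domain, ⟪C g, C u⟫_𝕜 = ⟪(g : E), p.2⟫_𝕜}
  zero_mem' := ⟨0, rfl, fun g => by simp⟩
  add_mem' := by
    rintro ⟨_, h₁⟩ ⟨_, h₂⟩ ⟨u, rfl, hu⟩ ⟨v, rfl, hv⟩
    exact ⟨u + v, rfl, fun g => by
      rw [C.map_add, inner_add_right, hu, hv, Prod.snd_add, inner_add_right]⟩
  smul_mem' := by
    rintro a ⟨_, h⟩ ⟨u, rfl, hu⟩
    exact ⟨a • u, rfl, fun g => by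
      rw [C.map_smul, inner_smul_right, hu, Prod.smul_snd, inner_smul_right]⟩

theorem mem_adjointCompSelfGraph {C : E →ₗ.[𝕜] F} {u h : E} :
    (u, h) ∈ C.adjointCompSelfGraph ↔
      ∃ x : C.domain, (x : E) = u ∧ ∀ g : C.domain, ⟪C g, C x⟫_𝕜 = ⟪(g : E), h⟫_𝕜 :=
  Iff.rfl

theorem exists_mem_adjointCompSelfGraph [CompleteSpace F] {C : E →ₗ.[𝕜] F}
    (hC : _root_.IsClosed (Set.range C)) {c : ℝ} (hbound : ∀ x : C.domain, ‖(x : E)‖ ≤ c * ‖C x‖)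
    (h : E) : ∃ u, (u, h) ∈ C.adjointCompSelfGraph := by
  have hinj : Function.Injective C := by
    refine (injective_iff_map_eq_zero C.toFun).mpr fun x hx => ?_
    have := hbound x
    rw [show C x = 0 from hx, norm_zero, mul_zero, norm_le_zero_iff] at this
    exact Subtype.ext this
  let K := LinearMap.range C.toFun
  have : CompleteSpace K := (show _root_.IsClosed (K : Set F) from hC).completeSpace_coe
  let e := LinearEquiv.ofInjective C.toFun hinj
  have hCe : ∀ w : K, C (e.symm w) = w := fun w => congrArg Subtype.val (e.apply_symm_apply w)
  have he : ∀ w : K, ‖((e.symm w : C.domain) : E)‖ ≤ c * ‖w‖ := fun w => by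
    simpa [hCe] using hbound (e.symm w)
  -- `w ↦ ⟪h, C⁻¹ w⟫` is bounded on the closed range of `C`, so Riesz represents it there.
  let φ : StrongDual 𝕜 K :=
    ((innerₛₗ 𝕜 h).comp (C.domain.subtype ∘ₗ e.symm.toLinearMap)).mkContinuous (‖h‖ * c)
      fun w => calc ‖⟪h, ((e.symm w : C.domain) : E)⟫_𝕜‖
          _ ≤ ‖h‖ * ‖((e.symm w : C.domain) : E)‖ := norm_inner_le_norm _ _
          _ ≤ ‖h‖ * c * ‖w‖ := by rw [mul_assoc]; gcongr; exact he w
  let v := (InnerProductSpace.toDual 𝕜 K).symm φ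
  refine ⟨e.symm v, e.symm v, rfl, fun g => ?_⟩
  rw [← inner_conj_symm, ← inner_conj_symm (g : E)]
  congr 1
  calc ⟪C (e.symm v), C g⟫_𝕜 = ⟪v, e g⟫_𝕜 := by rw [hCe]; rfl
    _ = φ (e g) := InnerProductSpace.toDual_symm_apply
    _ = ⟪h, ((e.symm (e g) : C.domain) : E)⟫_𝕜 := rfl
    _ = ⟪h, g⟫_𝕜 := by rw [e.symm_apply_apply]

theorem norm_le_inv_mul_of_mem_adjointCompSelfGraph {C : E →ₗ.[𝕜] F} {A : ℝ} (hA : 0 < A)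
    (hlow : ∀ x : C.domain, A * ‖(x : E)‖ ^ 2 ≤ ‖C x‖ ^ 2) {u h : E}
    (hp : (u, h) ∈ C.adjointCompSelfGraph) : ‖u‖ ≤ A⁻¹ * ‖h‖ := by
  obtain ⟨x, rfl, hx⟩ := mem_adjointCompSelfGraph.mp hp
  rw [le_inv_mul_iff₀ hA]
  rcases (norm_nonneg (x : E)).eq_or_lt with h0 | h0
  · rw [← h0, mul_zero]
    exact norm_nonneg h
  · refine le_of_mul_le_mul_left ?_ h0
    calc ‖(x : E)‖ * (A * ‖(x : E)‖) = A * ‖(x : E)‖ ^ 2 := by ring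
      _ ≤ ‖C x‖ ^ 2 := hlow x
      _ = RCLike.re ⟪(x : E), h⟫_𝕜 := by rw [← inner_self_eq_norm_sq (𝕜 := 𝕜), hx x]
      _ ≤ ‖(x : E)‖ * ‖h‖ := re_inner_le_norm _ _

theorem norm_sq_le_mul_of_mem_adjointCompSelfGraph {C : E →ₗ.[𝕜] F} {c : ℝ} {u : E}
    {x : C.domain} (hp : (u, (x : E)) ∈ C.adjointCompSelfGraph) (hu : ‖u‖ ≤ c * ‖(x : E)‖) :
    ‖(x : E)‖ ^ 2 ≤ c * ‖C x‖ ^ 2 := by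
  obtain ⟨y, rfl, hy⟩ := mem_adjointCompSelfGraph.mp hp
  have hx : ‖(x : E)‖ ^ 2 ≤ ‖C x‖ * ‖C y‖ := by
    rw [← inner_self_eq_norm_sq (𝕜 := 𝕜), ← hy x]
    exact re_inner_le_norm _ _
  have hy : ‖C y‖ ^ 2 ≤ c * ‖(x : E)‖ ^ 2 :=
    calc ‖C y‖ ^ 2 = RCLike.re ⟪(y : E), x⟫_𝕜 := by
          rw [← inner_self_eq_norm_sq (𝕜 := 𝕜), hy y]
      _ ≤ ‖(y : E)‖ * ‖(x : E)‖ := re_inner_le_norm _ _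
      _ ≤ c * ‖(x : E)‖ * ‖(x : E)‖ := by gcongr
      _ = c * ‖(x : E)‖ ^ 2 := by ring
  rcases (norm_nonneg (x : E)).eq_or_lt with h0 | h0
  · obtain rfl : x = 0 := Subtype.ext (norm_eq_zero.mp h0.symm)
    simp
  · refine le_of_mul_le_mul_right ?_ (pow_pos h0 2)
    calc ‖(x : E)‖ ^ 2 * ‖(x : E)‖ ^ 2 ≤ (‖C x‖ * ‖C y‖) * (‖C x‖ * ‖C y‖) :=
          mul_self_le_mul_self (sq_nonneg _) hx
      _ = ‖C x‖ ^ 2 * ‖C y‖ ^ 2 := by ring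
      _ ≤ ‖C x‖ ^ 2 * (c * ‖(x : E)‖ ^ 2) := by gcongr
      _ = c * ‖C x‖ ^ 2 * ‖(x : E)‖ ^ 2 := by ring

theorem IsClosed.exists_inverse_of_mul_norm_sq_le [CompleteSpace E] [CompleteSpace F]
    {C : E →ₗ.[𝕜] F} (hC : C.IsClosed) {A : ℝ} (hA : 0 < A)
    (hlow : ∀ x : C.domain, A * ‖(x : E)‖ ^ 2 ≤ ‖C x‖ ^ 2) :
    ∃ S : E →L[𝕜] E, (∀ u h, (u, h) ∈ C.adjointCompSelfGraph ↔ S h = u) ∧ ‖S‖ ≤ A⁻¹ := by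
  have hbound : ∀ x : C.domain, ‖(x : E)‖ ≤ (√A)⁻¹ * ‖C x‖ := fun x =>
    calc ‖(x : E)‖ = (√A)⁻¹ * √(A * ‖(x : E)‖ ^ 2) := by
          rw [Real.sqrt_mul hA.le, Real.sqrt_sq (norm_nonneg _),
            inv_mul_cancel_left₀ (Real.sqrt_pos.mpr hA).ne']
      _ ≤ (√A)⁻¹ * √(‖C x‖ ^ 2) := by gcongr; exact hlow x
      _ = (√A)⁻¹ * ‖C x‖ := by rw [Real.sqrt_sq (norm_nonneg _)]
  exact C.adjointCompSelfGraph.exists_continuousLinearMap_apply_eq_iff_mem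
    (exists_mem_adjointCompSelfGraph (hC.isClosed_range_of_bound hbound) hbound)
    (inv_nonneg.mpr hA.le) fun _ _ => norm_le_inv_mul_of_mem_adjointCompSelfGraph hA hlow

end LinearPMap

section AnalysisOperator

variable {ι 𝕜 E : Type*} [RCLike 𝕜] [NormedAddCommGroup E] [InnerProductSpace 𝕜 E]

variable (𝕜) in
def IsLowerSemiFrame (ξ : ι → E) (A : ℝ) : Prop :=
  ∀ f : E, (Summable fun i => ‖⟪ξ i, f⟫_𝕜‖ ^ 2) → A * ‖f‖ ^ 2 ≤ ∑' i, ‖⟪ξ i, f⟫_𝕜‖ ^ 2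

variable (𝕜) in
def analysisDomain (ξ : ι → E) : Submodule 𝕜 E where
  carrier := {f | Memℓp (fun i => ⟪ξ i, f⟫_𝕜) 2}
  zero_mem' := by
    change Memℓp (fun i => ⟪ξ i, 0⟫_𝕜) 2
    simp only [inner_zero_right]
    exact zero_memℓp
  add_mem' {f g} hf hg := by
    change Memℓp (fun i => ⟪ξ i, f + g⟫_𝕜) 2
    simp only [inner_add_right]
    exact hf.add hg
  smul_mem' a f hf := by
    change Memℓp (fun i => ⟪ξ i, a • f⟫_𝕜) 2
    simp only [inner_smul_right]
    exact hf.const_mul a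

variable (𝕜) in
def analysisOp (ξ : ι → E) : E →ₗ.[𝕜] ℓ²(ι, 𝕜) where
  domain := analysisDomain 𝕜 ξ
  toFun :=
    { toFun f := ⟨fun i => ⟪ξ i, (f : E)⟫_𝕜, f.2⟩
      map_add' _ _ := lp.ext <| funext fun _ => inner_add_right _ _ _
      map_smul' _ _ := lp.ext <| funext fun _ => inner_smul_right _ _ _ }

theorem mem_domain_analysisOp_iff {ξ : ι → E} {f : E} :
    f ∈ (analysisOp 𝕜 ξ).domain ↔ Summable fun i => ‖⟪ξ i, f⟫_𝕜‖ ^ 2 := by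
  change Memℓp _ 2 ↔ _
  rw [memℓp_gen_iff (by norm_num)]
  norm_num

theorem analysisOp_apply (ξ : ι → E) (f : (analysisOp 𝕜 ξ).domain) (i : ι) :
    analysisOp 𝕜 ξ f i = ⟪ξ i, (f : E)⟫_𝕜 :=
  rfl

variable (𝕜) in
theorem isClosed_analysisOp (ξ : ι → E) : (analysisOp 𝕜 ξ).IsClosed := by
  have hgraph : ((analysisOp 𝕜 ξ).graph : Set (E × ℓ²(ι, 𝕜))) =
      ⋂ i, {p | ⟪ξ i, p.1⟫_𝕜 = p.2 i} := by
    ext ⟨f, y⟩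
    simp only [SetLike.mem_coe, LinearPMap.mem_graph_iff, Set.mem_iInter, Set.mem_ofPred_eq]
    constructor
    · rintro ⟨x, rfl, rfl⟩ i
      rfl
    · intro h
      have hf : f ∈ analysisDomain 𝕜 ξ := show Memℓp _ 2 from (funext h) ▸ y.2
      exact ⟨⟨f, hf⟩, rfl, lp.ext (funext h)⟩
  rw [LinearPMap.IsClosed, hgraph]
  exact isClosed_iInter fun i => isClosed_eq (continuous_const.inner continuous_fst)
    ((lp.evalCLM 𝕜 _ 2 i).continuous.comp continuous_snd)

theorem hasSum_inner_analysisOp (ξ : ι → E) (f g : (analysisOp 𝕜 ξ).domain) :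
    HasSum (fun i => ⟪ξ i, (f : E)⟫_𝕜 * ⟪(g : E), ξ i⟫_𝕜)
      ⟪analysisOp 𝕜 ξ g, analysisOp 𝕜 ξ f⟫_𝕜 := by
  convert lp.hasSum_inner (analysisOp 𝕜 ξ g) (analysisOp 𝕜 ξ f) using 2 with i
  rw [analysisOp_apply, analysisOp_apply, RCLike.inner_apply, inner_conj_symm, mul_comm]

theorem hasSum_norm_sq_analysisOp (ξ : ι → E) (f : (analysisOp 𝕜 ξ).domain) :
    HasSum (fun i => ‖⟪ξ i, (f : E)⟫_𝕜‖ ^ 2) (‖analysisOp 𝕜 ξ f‖ ^ 2) := by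
  simpa [analysisOp_apply] using lp.hasSum_norm (p := 2) (by norm_num) (analysisOp 𝕜 ξ f)

theorem isLowerSemiFrame_iff_analysisOp {ξ : ι → E} {A : ℝ} :
    IsLowerSemiFrame 𝕜 ξ A ↔
      ∀ x : (analysisOp 𝕜 ξ).domain, A * ‖(x : E)‖ ^ 2 ≤ ‖analysisOp 𝕜 ξ x‖ ^ 2 := by
  refine ⟨fun h x => ?_, fun h f hf => ?_⟩
  · rw [← (hasSum_norm_sq_analysisOp ξ x).tsum_eq]
    exact h x (mem_domain_analysisOp_iff.mp x.2)
  · rw [(hasSum_norm_sq_analysisOp ξ ⟨f, mem_domain_analysisOp_iff.mpr hf⟩).tsum_eq]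
    exact h ⟨f, mem_domain_analysisOp_iff.mpr hf⟩

theorem mem_adjointCompSelfGraph_analysisOp_iff {ξ : ι → E} {u h : E} :
    (u, h) ∈ (analysisOp 𝕜 ξ).adjointCompSelfGraph ↔ (Summable fun i => ‖⟪ξ i, u⟫_𝕜‖ ^ 2) ∧
      ∀ g : E, (Summable fun i => ‖⟪ξ i, g⟫_𝕜‖ ^ 2) →
        HasSum (fun i => ⟪ξ i, u⟫_𝕜 * ⟪g, ξ i⟫_𝕜) ⟪g, h⟫_𝕜 := by
  rw [LinearPMap.mem_adjointCompSelfGraph]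
  constructor
  · rintro ⟨x, rfl, hx⟩
    refine ⟨mem_domain_analysisOp_iff.mp x.2, fun g hg => ?_⟩
    simpa only [hx] using hasSum_inner_analysisOp ξ x ⟨g, mem_domain_analysisOp_iff.mpr hg⟩
  · rintro ⟨hu, hsum⟩
    refine ⟨⟨u, mem_domain_analysisOp_iff.mpr hu⟩, rfl, fun g => ?_⟩
    exact (hasSum_inner_analysisOp ξ _ g).unique (hsum g (mem_domain_analysisOp_iff.mp g.2))

end AnalysisOperator

theorem stmt5_general {H : Type*} [NormedAddCommGroup H] [InnerProductSpace ℂ H] [CompleteSpace H]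
    (ξ : ℕ → H) (A : ℝ) (hA : 0 < A)
    (domT : Set H) (T : H → H)
    (hT1 : ∀ f ∈ domT, (Summable fun n => ‖⟪ξ n, f⟫‖ ^ 2) ∧
      ∀ g : H, (Summable fun n => ‖⟪ξ n, g⟫‖ ^ 2) →
        HasSum (fun n => ⟪ξ n, f⟫ * ⟪g, ξ n⟫) ⟪g, T f⟫)
    (hT2 : ∀ f : H, (Summable fun n => ‖⟪ξ n, f⟫‖ ^ 2) → ∀ h : H,
      (∀ g : H, (Summable fun n => ‖⟪ξ n, g⟫‖ ^ 2) →
        HasSum (fun n => ⟪ξ n, f⟫ * ⟪g, ξ n⟫) ⟪g, h⟫) → f ∈ domT ∧ T f = h) :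
    (∀ f : H, (Summable fun n => ‖⟪ξ n, f⟫‖ ^ 2) → A * ‖f‖ ^ 2 ≤ ∑' n, ‖⟪ξ n, f⟫‖ ^ 2)
    ↔ ∃ Tinv : H →L[ℂ] H, (∀ f ∈ domT, Tinv (T f) = f) ∧
        (∀ h : H, Tinv h ∈ domT ∧ T (Tinv h) = h) ∧ ‖Tinv‖ ≤ A⁻¹ := by
  have hgraph : ∀ u h, (u, h) ∈ (analysisOp ℂ ξ).adjointCompSelfGraph ↔ u ∈ domT ∧ T u = h :=
    fun u h => by
      rw [mem_adjointCompSelfGraph_analysisOp_iff]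
      exact ⟨fun hp => hT2 u hp.1 h hp.2, by rintro ⟨hu, rfl⟩; exact hT1 u hu⟩
  refine (isLowerSemiFrame_iff_analysisOp (𝕜 := ℂ)).trans ⟨fun hlow => ?_, ?_⟩
  · obtain ⟨S, hS, hSnorm⟩ := (isClosed_analysisOp ℂ ξ).exists_inverse_of_mul_norm_sq_le hA hlow
    exact ⟨S, fun f hf => (hS f (T f)).mp ((hgraph f (T f)).mpr ⟨hf, rfl⟩),
      fun h => (hgraph _ h).mp ((hS _ h).mpr rfl), hSnorm⟩
  · rintro ⟨S, -, hTS, hSnorm⟩ x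
    have hSx : ‖S x‖ ≤ A⁻¹ * ‖(x : H)‖ :=
      (S.le_opNorm x).trans (mul_le_mul_of_nonneg_right hSnorm (norm_nonneg _))
    rw [← le_inv_mul_iff₀ hA]
    exact LinearPMap.norm_sq_le_mul_of_mem_adjointCompSelfGraph ((hgraph _ x).mpr (hTS x)) hSx

/-- Let `ξ` have dense domain and `T_ξ = C_ξ*C_ξ` be the associated operator. Then `ξ` is a
lower semi-frame with bound `A > 0` (i.e. `A‖f‖² ≤ Σₙ|⟨f,ξₙ⟩|²` for all `f ∈ H`, the
inequality being trivial off `dom(ξ)`) if and only if `0 ∈ ρ(T_ξ)` and `‖T_ξ⁻¹‖ ≤ A⁻¹`. -/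
theorem stmt5 {H : Type*} [NormedAddCommGroup H] [InnerProductSpace ℂ H] [CompleteSpace H]
    (ξ : ℕ → H) (A : ℝ) (hA : 0 < A)
    (hdense : Dense {f : H | Summable fun n => ‖⟪ξ n, f⟫‖ ^ 2})
    (domT : Set H) (T : H → H)
    (hT1 : ∀ f ∈ domT, (Summable fun n => ‖⟪ξ n, f⟫‖ ^ 2) ∧
      ∀ g : H, (Summable fun n => ‖⟪ξ n, g⟫‖ ^ 2) →
        HasSum (fun n => ⟪ξ n, f⟫ * ⟪g, ξ n⟫) ⟪g, T f⟫)
    (hT2 : ∀ f : H, (Summable fun n => ‖⟪ξ n, f⟫‖ ^ 2) → ∀ h : H,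
      (∀ g : H, (Summable fun n => ‖⟪ξ n, g⟫‖ ^ 2) →
        HasSum (fun n => ⟪ξ n, f⟫ * ⟪g, ξ n⟫) ⟪g, h⟫) → f ∈ domT ∧ T f = h) :
    (∀ f : H, (Summable fun n => ‖⟪ξ n, f⟫‖ ^ 2) → A * ‖f‖ ^ 2 ≤ ∑' n, ‖⟪ξ n, f⟫‖ ^ 2)
    ↔ ∃ Tinv : H →L[ℂ] H, (∀ f ∈ domT, Tinv (T f) = f) ∧
        (∀ h : H, Tinv h ∈ domT ∧ T (Tinv h) = h) ∧ ‖Tinv‖ ≤ A⁻¹ :=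
  stmt5_general ξ A hA domT T hT1 hT2
end

section
/- Let {eₙ} be an orthonormal basis of H, φₙ = V eₙ with V ∈ B(H) bounded and bijective (so φ = {φₙ} is a Riesz basis), ψₙ = (V⁻¹)* eₙ its canonical dual, and α = {αₙ} a complex sequence. Set ξ = {φₙ} and η = {αₙ ψₙ}. Then the form Ω_{ξ,η}(f,g) = Σₙ αₙ ⟨f,φₙ⟩⟨ψₙ,g⟩ on H × dom(η) is 0-closed (equivalently, the associated operator H^α f = Σₙ αₙ ⟨f,φₙ⟩ψₙ is boundedly invertible) if and only if inf_n |αₙ| > 0. -/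
local notation "⟪" x ", " y "⟫" => @inner ℂ _ _ x y

/-! The coefficient map `x ↦ (⟪φₙ, x⟫)ₙ = (⟪eₙ, V* x⟫)ₙ` is an isomorphism `H ≃ ℓ²` whose
inverse is `c ↦ Σₙ cₙ ψₙ`; in these coordinates `H^α` is multiplication by `α`. If `|αₙ| ≥ c > 0`,
multiplication by `α⁻¹` is bounded on `ℓ²` and, transported back to `H`, inverts `H^α`. Conversely,
biorthogonality gives `H^α ψₘ = αₘ ψₘ`, so a bounded inverse `K` satisfies `ψₘ = αₘ K ψₘ`,
whence `|αₘ| ≥ 1 / ‖K‖`. -/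

open scoped InnerProductSpace lp

theorem memℓp_two_iff_summable_sq {ι : Type*} {E : ι → Type*} [∀ i, NormedAddCommGroup (E i)]
    {f : ∀ i, E i} : Memℓp f 2 ↔ Summable fun i => ‖f i‖ ^ 2 := by
  rw [memℓp_gen_iff (by norm_num)]
  norm_num

theorem one_le_norm_mul_opNorm_of_smul_apply_eq {𝕜 E : Type*} [NontriviallyNormedField 𝕜]
    [NormedAddCommGroup E] [NormedSpace 𝕜 E] {T : E →L[𝕜] E} {x : E} (hx : x ≠ 0) {a : 𝕜}
    (h : a • T x = x) : 1 ≤ ‖a‖ * ‖T‖ := by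
  have hx' : 0 < ‖x‖ := norm_pos_iff.mpr hx
  refine le_of_mul_le_mul_right ?_ hx'
  calc 1 * ‖x‖ = ‖a • T x‖ := by rw [h, one_mul]
    _ ≤ ‖a‖ * (‖T‖ * ‖x‖) := by rw [norm_smul]; gcongr; exact T.le_opNorm x
    _ = ‖a‖ * ‖T‖ * ‖x‖ := by ring

theorem exists_pos_le_norm_of_biorthogonal {ι 𝕜 F : Type*} [RCLike 𝕜] [NormedAddCommGroup F]
    [InnerProductSpace 𝕜 F] [DecidableEq ι] {φ ψ : ι → F}
    (hφψ : ∀ i j, ⟪φ i, ψ j⟫_𝕜 = if i = j then 1 else 0) (α : ι → 𝕜) (Hop : F → F)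
    (Hinv : F →L[𝕜] F)
    (hHop : ∀ f, (Summable fun i => ‖α i * ⟪φ i, f⟫_𝕜‖ ^ 2) →
      HasSum (fun i => (α i * ⟪φ i, f⟫_𝕜) • ψ i) (Hop f))
    (hHinv : ∀ f, (Summable fun i => ‖α i * ⟪φ i, f⟫_𝕜‖ ^ 2) → Hinv (Hop f) = f) :
    ∃ c > (0 : ℝ), ∀ i, c ≤ ‖α i‖ := by
  have hcoeff (i j : ι) : α i * ⟪φ i, ψ j⟫_𝕜 = if i = j then α j else 0 := by
    split_ifs <;> simp_all
  have hsummable (j : ι) : Summable fun i => ‖α i * ⟪φ i, ψ j⟫_𝕜‖ ^ 2 := by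
    simp only [hcoeff]
    exact summable_of_ne_finset_zero (s := {j}) fun i hi => by simp_all
  have heigen (j : ι) : Hop (ψ j) = α j • ψ j := by
    refine (hHop _ (hsummable j)).unique ?_
    simp only [hcoeff]
    simpa using hasSum_single (f := fun i => (if i = j then α j else 0) • ψ i) j (by simp_all)
  have hbound (j : ι) : 1 ≤ ‖α j‖ * ‖Hinv‖ := by
    have hψ : ψ j ≠ 0 := fun h => by simpa [h] using hφψ j j
    refine one_le_norm_mul_opNorm_of_smul_apply_eq hψ ?_
    rw [← map_smul, ← heigen, hHinv _ (hsummable j)]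
  refine ⟨(‖Hinv‖ + 1)⁻¹, by positivity, fun j => ?_⟩
  rw [inv_le_iff_one_le_mul₀ (by positivity)]
  nlinarith [hbound j, norm_nonneg (α j)]

section

variable {𝕜 E F : Type*} [RCLike 𝕜] [NormedAddCommGroup E] [InnerProductSpace 𝕜 E]
  [CompleteSpace E] [NormedAddCommGroup F] [InnerProductSpace 𝕜 F] [CompleteSpace F]

namespace ContinuousLinearEquiv

noncomputable def adjoint (V : E ≃L[𝕜] F) : F ≃L[𝕜] E :=
  equivOfInverse' (ContinuousLinearMap.adjoint (V : E →L[𝕜] F))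
    (ContinuousLinearMap.adjoint (V.symm : F →L[𝕜] E))
    (by rw [← ContinuousLinearMap.adjoint_comp, coe_symm_comp_coe, ContinuousLinearMap.adjoint_id])
    (by rw [← ContinuousLinearMap.adjoint_comp, coe_comp_coe_symm, ContinuousLinearMap.adjoint_id])

theorem adjoint_inner_right (V : E ≃L[𝕜] F) (x : E) (y : F) :
    ⟪x, V.adjoint y⟫_𝕜 = ⟪V x, y⟫_𝕜 :=
  ContinuousLinearMap.adjoint_inner_right _ x y

theorem adjoint_symm_inner_right (V : E ≃L[𝕜] F) (x : F) (y : E) :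
    ⟪x, V.adjoint.symm y⟫_𝕜 = ⟪V.symm x, y⟫_𝕜 :=
  ContinuousLinearMap.adjoint_inner_right _ x y

end ContinuousLinearEquiv

namespace HilbertBasis

variable {ι : Type*} (b : HilbertBasis ι 𝕜 E) (V : E ≃L[𝕜] F)

noncomputable def rieszAnalysis : F ≃L[𝕜] ℓ²(ι, 𝕜) := V.adjoint.trans b.repr.toContinuousLinearEquiv

theorem rieszAnalysis_apply (x : F) (i : ι) : b.rieszAnalysis V x i = ⟪V (b i), x⟫_𝕜 := by
  simp [rieszAnalysis, b.repr_apply_apply, V.adjoint_inner_right]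

theorem hasSum_rieszAnalysis_symm (c : ℓ²(ι, 𝕜)) :
    HasSum (fun i => c i • V.adjoint.symm (b i)) ((b.rieszAnalysis V).symm c) := by
  simpa [rieszAnalysis] using (b.hasSum_repr_symm c).mapL (V.adjoint.symm : E →L[𝕜] F)

theorem inner_apply_adjoint_symm_apply [DecidableEq ι] (i j : ι) :
    ⟪V (b i), V.adjoint.symm (b j)⟫_𝕜 = if i = j then 1 else 0 := by
  rw [V.adjoint_symm_inner_right, V.symm_apply_apply]
  exact orthonormal_iff_ite.mp b.orthonormal i j

theorem rieszAnalysis_ext {x y : F} (h : ∀ i, ⟪V (b i), x⟫_𝕜 = ⟪V (b i), y⟫_𝕜) : x = y :=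
  (b.rieszAnalysis V).injective <| lp.ext <| funext fun i => by simp only [rieszAnalysis_apply, h]

theorem summable_norm_inner_sq (x : F) : Summable fun i => ‖⟪V (b i), x⟫_𝕜‖ ^ 2 := by
  simpa [rieszAnalysis_apply] using memℓp_two_iff_summable_sq.mp (lp.memℓp (b.rieszAnalysis V x))

theorem exists_hasSum_of_summable_sq {c : ι → 𝕜} (hc : Summable fun i => ‖c i‖ ^ 2) :
    ∃ x, (∀ i, ⟪V (b i), x⟫_𝕜 = c i) ∧ HasSum (fun i => c i • V.adjoint.symm (b i)) x := by
  set x := (b.rieszAnalysis V).symm ⟨c, memℓp_two_iff_summable_sq.mpr hc⟩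
  refine ⟨x, fun i => ?_, b.hasSum_rieszAnalysis_symm V _⟩
  rw [← rieszAnalysis_apply, ContinuousLinearEquiv.apply_symm_apply]

noncomputable def rieszMultiplier (β : ι → 𝕜) {C : ℝ} (hC : 0 ≤ C) (hβ : ∀ i, ‖β i‖ ≤ C) :
    F →L[𝕜] F :=
  (b.rieszAnalysis V).symm.toContinuousLinearMap ∘L
    lp.mapCLM 2 (fun i => β i • ContinuousLinearMap.id 𝕜 𝕜) hC
      (fun i => (ContinuousLinearMap.opNorm_smul_le _ _).trans <|
        (mul_le_of_le_one_right (norm_nonneg _) ContinuousLinearMap.norm_id_le).trans (hβ i)) ∘L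
    (b.rieszAnalysis V).toContinuousLinearMap

theorem inner_rieszMultiplier (β : ι → 𝕜) {C : ℝ} (hC : 0 ≤ C) (hβ : ∀ i, ‖β i‖ ≤ C) (x : F)
    (i : ι) : ⟪V (b i), b.rieszMultiplier V β hC hβ x⟫_𝕜 = β i * ⟪V (b i), x⟫_𝕜 := by
  simp [← rieszAnalysis_apply, rieszMultiplier]

theorem exists_rieszOperator_and_inverse {α : ι → 𝕜} {c : ℝ} (hc : 0 < c)
    (hα : ∀ i, c ≤ ‖α i‖) :
    ∃ (Hop : F → F) (Hinv : F →L[𝕜] F),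
      (∀ f, (Summable fun i => ‖α i * ⟪V (b i), f⟫_𝕜‖ ^ 2) →
        HasSum (fun i => (α i * ⟪V (b i), f⟫_𝕜) • V.adjoint.symm (b i)) (Hop f)) ∧
      (∀ f, (Summable fun i => ‖α i * ⟪V (b i), f⟫_𝕜‖ ^ 2) → Hinv (Hop f) = f) ∧
      (∀ h, (Summable fun i => ‖α i * ⟪V (b i), Hinv h⟫_𝕜‖ ^ 2) ∧ Hop (Hinv h) = h) := by
  have hα0 (i : ι) : α i ≠ 0 := norm_pos_iff.mp (hc.trans_le (hα i))
  have hαinv (i : ι) : ‖(α i)⁻¹‖ ≤ c⁻¹ := by rw [norm_inv]; exact inv_anti₀ hc (hα i)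
  set Hinv := b.rieszMultiplier V (fun i => (α i)⁻¹) (inv_nonneg.mpr hc.le) hαinv
  set Hop : F → F := fun f => ∑' i, (α i * ⟪V (b i), f⟫_𝕜) • V.adjoint.symm (b i)
  have hHop {f : F} (hf : Summable fun i => ‖α i * ⟪V (b i), f⟫_𝕜‖ ^ 2) :
      HasSum (fun i => (α i * ⟪V (b i), f⟫_𝕜) • V.adjoint.symm (b i)) (Hop f) ∧
        ∀ i, ⟪V (b i), Hop f⟫_𝕜 = α i * ⟪V (b i), f⟫_𝕜 := by
    obtain ⟨x, hx, hsum⟩ := b.exists_hasSum_of_summable_sq V hf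
    simp only [Hop, hsum.tsum_eq]
    exact ⟨hsum, hx⟩
  have hHinv (h : F) (i : ι) : α i * ⟪V (b i), Hinv h⟫_𝕜 = ⟪V (b i), h⟫_𝕜 := by
    rw [inner_rieszMultiplier, mul_inv_cancel_left₀ (hα0 i)]
  refine ⟨Hop, Hinv, fun f hf => (hHop hf).1, fun f hf => ?_, fun h => ?_⟩
  · refine b.rieszAnalysis_ext V fun i => ?_
    rw [inner_rieszMultiplier, (hHop hf).2, inv_mul_cancel_left₀ (hα0 i)]
  · have hs : Summable fun i => ‖α i * ⟪V (b i), Hinv h⟫_𝕜‖ ^ 2 := by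
      simpa only [hHinv] using b.summable_norm_inner_sq V h
    exact ⟨hs, b.rieszAnalysis_ext V fun i => by rw [(hHop hs).2, hHinv]⟩

end HilbertBasis

end

/-- Let `φₙ = Veₙ` be a Riesz basis (`V` bounded and boundedly invertible, `{eₙ}` an ONB),
`ψₙ = (V⁻¹)*eₙ` its canonical dual and `α` a complex sequence. The operator
`H^α f = Σₙ αₙ⟨f,φₙ⟩ψₙ`, defined on `{f : Σₙ |αₙ|²|⟨f,φₙ⟩|² < ∞}`, is boundedly
invertible (equivalently the form `Ω_{ξ,η}` with `ξ = {φₙ}`, `η = {αₙψₙ}` is 0-closed)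
if and only if `inf_n |αₙ| > 0`. -/
theorem stmt14 {H : Type*} [NormedAddCommGroup H] [InnerProductSpace ℂ H] [CompleteSpace H]
    (e : ℕ → H) (he : Orthonormal ℂ e)
    (hetotal : (Submodule.span ℂ (Set.range e)).topologicalClosure = ⊤)
    (V : H ≃L[ℂ] H) (α : ℕ → ℂ) (φ ψ : ℕ → H)
    (hφ : ∀ n, φ n = V (e n))
    (hψ : ∀ n, ψ n = ContinuousLinearMap.adjoint (V.symm : H →L[ℂ] H) (e n)) :
    (∃ (Hop : H → H) (Hinv : H →L[ℂ] H),
      (∀ f : H, (Summable fun n => ‖α n * ⟪φ n, f⟫‖ ^ 2) →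
        HasSum (fun n => (α n * ⟪φ n, f⟫) • ψ n) (Hop f)) ∧
      (∀ f : H, (Summable fun n => ‖α n * ⟪φ n, f⟫‖ ^ 2) → Hinv (Hop f) = f) ∧
      (∀ h : H, (Summable fun n => ‖α n * ⟪φ n, Hinv h⟫‖ ^ 2) ∧ Hop (Hinv h) = h))
    ↔ ∃ c > (0 : ℝ), ∀ n, c ≤ ‖α n‖ := by
  obtain ⟨b, rfl⟩ : ∃ b : HilbertBasis ℕ ℂ H, ⇑b = e := ⟨_, HilbertBasis.coe_mk he hetotal.ge⟩
  obtain rfl : φ = fun n => V (b n) := funext hφ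
  obtain rfl : ψ = fun n => V.adjoint.symm (b n) := funext hψ
  exact ⟨fun ⟨Hop, Hinv, hHop, hHinv, _⟩ =>
      exists_pos_le_norm_of_biorthogonal (b.inner_apply_adjoint_symm_apply V) α Hop Hinv hHop hHinv,
    fun ⟨c, hc, hα⟩ => b.exists_rieszOperator_and_inverse V hc hα⟩
end
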